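/- Let S be a finite set with at least two elements and (P_t)_{t≥0} a sequence of row-stochastic S × S real matrices, and fix m ≥ 1. Let μ¹ and μ² be probability vectors on S. Then for every n ≥ 1, max_{A ⊆ S} ((μ¹ P_{0,nm})(A) − (μ² P_{0,nm})(A)) ≤ Σ_{(x1,x2)∈S×S, x1≠x2} μ¹(x1) μ²(x2) · ((V_0^{(m)} V_m^{(m)} ⋯ V_{(n−1)m}^{(m)}) 𝟙)(x1, x2), where 𝟙 is the all-ones vector on S × S and the matrices V_{tm}^{(m)} are multiplied in increasing order of t. -/
import Mathlib

/-- The `overlap coefficient` of rows `x1` and `x2` of the matrix `Q`: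
`α(x1,x2) := ∑_y min(Q(x1,y), Q(x2,y))`. -/
noncomputable def mdCoeff {S : Type*} [Fintype S] (Q : Matrix S S ℝ) (x1 x2 : S) : ℝ :=
  ∑ y, min (Q x1 y) (Q x2 y)

/-- The coupling matrix `V` associated with the transition matrix `Q`, indexed
by pairs of states. -/
noncomputable def couplingMatrix {S : Type*} [Fintype S] [DecidableEq S]
    (Q : Matrix S S ℝ) : Matrix (S × S) (S × S) ℝ :=
  fun p q =>
    if p.1 = p.2 ∨ mdCoeff Q p.1 p.2 = 1 then 0
    else (Q p.1 q.1 - min (Q p.1 q.1) (Q p.2 q.1)) *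
         (Q p.2 q.2 - min (Q p.1 q.2) (Q p.2 q.2)) / (1 - mdCoeff Q p.1 p.2)

/-- `transMat P s k` is the transition matrix of the non-homogeneous chain
with one-step matrices `(P t)` from time `s` to time `s + k`:
`P_{s,s+k} = P_s ⬝ P_{s+1} ⬝ ⋯ ⬝ P_{s+k-1}` (the identity when `k = 0`). -/
noncomputable def transMat {S : Type*} [Fintype S] [DecidableEq S]
    (P : ℕ → Matrix S S ℝ) : ℕ → ℕ → Matrix S S ℝ
  | _, 0 => 1
  | s, k + 1 => P s * transMat P (s + 1) k

/-- `couplingProd P m n = V_0^{(m)} V_m^{(m)} ⋯ V_{(n-1)m}^{(m)}`, the product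
of the coupling matrices `V_{tm}^{(m)} := couplingMatrix (P_{tm, tm+m})`
in increasing order of `t`. -/
noncomputable def couplingProd {S : Type*} [Fintype S] [DecidableEq S]
    (P : ℕ → Matrix S S ℝ) (m : ℕ) : ℕ → Matrix (S × S) (S × S) ℝ
  | 0 => 1
  | n + 1 => couplingProd P m n * couplingMatrix (transMat P (n * m) m)

section Aux
set_option linter.unusedSectionVars false

variable {S : Type*} [Fintype S] [DecidableEq S]

lemma transMat_nonneg (P : ℕ → Matrix S S ℝ) (hnonneg : ∀ t x y, 0 ≤ P t x y) :
    ∀ (k s : ℕ) (x y : S), 0 ≤ transMat P s k x y := by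
  intro k
  induction k with
  | zero =>
      intro s x y
      show (0:ℝ) ≤ (1 : Matrix S S ℝ) x y
      rw [Matrix.one_apply]
      split_ifs <;> norm_num
  | succ k ih =>
      intro s x y
      show (0:ℝ) ≤ (P s * transMat P (s+1) k) x y
      rw [Matrix.mul_apply]
      exact Finset.sum_nonneg fun z _ => mul_nonneg (hnonneg s x z) (ih (s+1) z y)

lemma transMat_row (P : ℕ → Matrix S S ℝ) (hrow : ∀ t x, ∑ y, P t x y = 1) :
    ∀ (k s : ℕ) (x : S), ∑ y, transMat P s k x y = 1 := by
  intro k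
  induction k with
  | zero =>
      intro s x
      show ∑ y, (1 : Matrix S S ℝ) x y = 1
      simp [Matrix.one_apply]
  | succ k ih =>
      intro s x
      show ∑ y, (P s * transMat P (s+1) k) x y = 1
      simp only [Matrix.mul_apply]
      rw [Finset.sum_comm]
      calc ∑ z, ∑ y, P s x z * transMat P (s+1) k z y
          = ∑ z, P s x z * ∑ y, transMat P (s+1) k z y := by
            simp [Finset.mul_sum]
        _ = ∑ z, P s x z := by
            refine Finset.sum_congr rfl fun z _ => ?_
            rw [ih (s+1) z, mul_one]
        _ = 1 := hrow s x

lemma transMat_add (P : ℕ → Matrix S S ℝ) :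
    ∀ (a b s : ℕ), transMat P s (a + b) = transMat P s a * transMat P (s + a) b := by
  intro a
  induction a with
  | zero => intro b s; simp [transMat]
  | succ a ih =>
      intro b s
      have h1 : a + 1 + b = (a + b) + 1 := by omega
      rw [h1]
      show P s * transMat P (s+1) (a + b) = transMat P s (a+1) * transMat P (s + (a+1)) b
      rw [ih b (s+1)]
      show P s * (transMat P (s+1) a * transMat P (s + 1 + a) b) = _
      rw [← mul_assoc]
      have h2 : s + 1 + a = s + (a + 1) := by omega
      rw [h2]
      rfl

lemma transMat_shift (P : ℕ → Matrix S S ℝ) (c : ℕ) :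
    ∀ (k s : ℕ), transMat (fun t => P (t + c)) s k = transMat P (s + c) k := by
  intro k
  induction k with
  | zero => intro s; rfl
  | succ k ih =>
      intro s
      show P (s + c) * transMat (fun t => P (t + c)) (s+1) k
        = P (s + c) * transMat P (s + c + 1) k
      rw [ih (s+1)]
      have : s + 1 + c = s + c + 1 := by omega
      rw [this]

lemma mdCoeff_le_one (R : Matrix S S ℝ) (hrow : ∀ x, ∑ y, R x y = 1) (x1 x2 : S) :
    mdCoeff R x1 x2 ≤ 1 := by
  calc mdCoeff R x1 x2 ≤ ∑ y, R x1 y :=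
        Finset.sum_le_sum fun y _ => min_le_left _ _
    _ = 1 := hrow x1

lemma couplingMatrix_nonneg (R : Matrix S S ℝ) (hrow : ∀ x, ∑ y, R x y = 1)
    (p q : S × S) : 0 ≤ couplingMatrix R p q := by
  unfold couplingMatrix
  split_ifs with h
  · exact le_refl 0
  · push_neg at h
    have hlt : mdCoeff R p.1 p.2 < 1 := lt_of_le_of_ne (mdCoeff_le_one R hrow _ _) h.2
    apply div_nonneg
    · exact mul_nonneg (sub_nonneg.2 (min_le_left _ _)) (sub_nonneg.2 (min_le_right _ _))
    · linarith

lemma couplingProd_nonneg (P : ℕ → Matrix S S ℝ) (hrow : ∀ t x, ∑ y, P t x y = 1)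
    (m : ℕ) : ∀ (n : ℕ) (p q : S × S), 0 ≤ couplingProd P m n p q := by
  intro n
  induction n with
  | zero =>
      intro p q
      show (0:ℝ) ≤ (1 : Matrix (S × S) (S × S) ℝ) p q
      rw [Matrix.one_apply]; split_ifs <;> norm_num
  | succ n ih =>
      intro p q
      show (0:ℝ) ≤ (couplingProd P m n * couplingMatrix (transMat P (n*m) m)) p q
      rw [Matrix.mul_apply]
      exact Finset.sum_nonneg fun z _ => mul_nonneg (ih p z)
        (couplingMatrix_nonneg _ (transMat_row P hrow m (n*m)) z q)

lemma couplingProd_succ_left (m : ℕ) :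
    ∀ (n : ℕ) (P : ℕ → Matrix S S ℝ),
      couplingProd P m (n + 1)
        = couplingMatrix (transMat P 0 m) * couplingProd (fun t => P (t + m)) m n := by
  intro n
  induction n with
  | zero =>
      intro P
      show couplingProd P m 0 * couplingMatrix (transMat P (0*m) m) = _
      show (1 : Matrix (S×S) (S×S) ℝ) * couplingMatrix (transMat P (0*m) m)
        = couplingMatrix (transMat P 0 m) * (1 : Matrix (S×S) (S×S) ℝ)
      rw [one_mul, mul_one, Nat.zero_mul]
  | succ n ih =>
      intro P
      show couplingProd P m (n+1) * couplingMatrix (transMat P ((n+1)*m) m) = _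
      rw [ih P]
      have h1 : transMat P ((n+1)*m) m = transMat (fun t => P (t + m)) (n*m) m := by
        rw [transMat_shift P m m (n*m)]
        have hnm : (n+1)*m = n*m + m := by ring
        rw [hnm]
      rw [h1, mul_assoc]
      rfl

/-- Key one-step coupling inequality. -/
lemma key_step (R : Matrix S S ℝ) (hn : ∀ x y, 0 ≤ R x y) (hr : ∀ x, ∑ y, R x y = 1)
    (g : S → ℝ) (h : S × S → ℝ) (hh : ∀ p, 0 ≤ h p)
    (hgh : ∀ y1 y2, y1 ≠ y2 → g y1 - g y2 ≤ h (y1, y2))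
    (x1 x2 : S) (hx : x1 ≠ x2) :
    R.mulVec g x1 - R.mulVec g x2 ≤ (couplingMatrix R).mulVec h (x1, x2) := by
  have hmv : ∀ x, R.mulVec g x = ∑ y, R x y * g y := fun x => rfl
  have hmvC : (couplingMatrix R).mulVec h (x1, x2)
      = ∑ q : S × S, couplingMatrix R (x1, x2) q * h q := rfl
  by_cases hα : mdCoeff R x1 x2 = 1
  · -- rows equal, both sides are 0
    have hsum : ∑ y, (R x1 y - min (R x1 y) (R x2 y)) = 0 := by
      rw [Finset.sum_sub_distrib, hr]
      have : ∑ y, min (R x1 y) (R x2 y) = 1 := hα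
      rw [this]; ring
    have hmin1 : ∀ y ∈ Finset.univ, R x1 y - min (R x1 y) (R x2 y) = 0 :=
      (Finset.sum_eq_zero_iff_of_nonneg
        (fun y _ => sub_nonneg.2 (min_le_left _ _))).1 hsum
    have hsum2 : ∑ y, (R x2 y - min (R x1 y) (R x2 y)) = 0 := by
      rw [Finset.sum_sub_distrib, hr]
      have : ∑ y, min (R x1 y) (R x2 y) = 1 := hα
      rw [this]; ring
    have hmin2 : ∀ y ∈ Finset.univ, R x2 y - min (R x1 y) (R x2 y) = 0 :=
      (Finset.sum_eq_zero_iff_of_nonneg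
        (fun y _ => sub_nonneg.2 (min_le_right _ _))).1 hsum2
    have heq : ∀ y, R x1 y = R x2 y := by
      intro y
      have e1 := sub_eq_zero.1 (hmin1 y (Finset.mem_univ y))
      have e2 := sub_eq_zero.1 (hmin2 y (Finset.mem_univ y))
      exact e1.trans e2.symm
    have hL : R.mulVec g x1 - R.mulVec g x2 = 0 := by
      rw [hmv, hmv, sub_eq_zero]
      exact Finset.sum_congr rfl fun y _ => by rw [heq y]
    have hR : (couplingMatrix R).mulVec h (x1, x2) = 0 := by
      rw [hmvC]
      apply Finset.sum_eq_zero
      intro q _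
      have : couplingMatrix R (x1, x2) q = 0 := by
        simp only [couplingMatrix]
        rw [if_pos (Or.inr hα)]
      rw [this, zero_mul]
    rw [hL, hR]
  · -- main case
    have hαlt : mdCoeff R x1 x2 < 1 := lt_of_le_of_ne (mdCoeff_le_one R hr _ _) hα
    set α := mdCoeff R x1 x2 with hαdef
    have hpos : 0 < 1 - α := by linarith
    set a : S → ℝ := fun y => R x1 y - min (R x1 y) (R x2 y) with ha_def
    set b : S → ℝ := fun y => R x2 y - min (R x1 y) (R x2 y) with hb_def
    have ha : ∀ y, 0 ≤ a y := fun y => sub_nonneg.2 (min_le_left _ _)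
    have hb : ∀ y, 0 ≤ b y := fun y => sub_nonneg.2 (min_le_right _ _)
    have hsa : ∑ y, a y = 1 - α := by
      simp only [ha_def, Finset.sum_sub_distrib, hr x1, hαdef, mdCoeff]
    have hsb : ∑ y, b y = 1 - α := by
      simp only [hb_def, Finset.sum_sub_distrib, hr x2, hαdef, mdCoeff]
    have hLHS : R.mulVec g x1 - R.mulVec g x2 = ∑ y, a y * g y - ∑ y, b y * g y := by
      rw [hmv, hmv]
      simp only [ha_def, hb_def, sub_mul, Finset.sum_sub_distrib]
      ring
    have hRHS : (couplingMatrix R).mulVec h (x1, x2)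
        = ∑ p : S × S, a p.1 * b p.2 / (1 - α) * h p := by
      rw [hmvC]
      refine Finset.sum_congr rfl fun q _ => ?_
      congr 1
      simp only [couplingMatrix]
      rw [if_neg (by push_neg; exact ⟨hx, hα⟩)]
    have hkey : ∑ p : S × S, a p.1 * b p.2 * (g p.1 - g p.2)
        ≤ ∑ p : S × S, a p.1 * b p.2 * h p := by
      refine Finset.sum_le_sum fun p _ => ?_
      by_cases hp : p.1 = p.2
      · rw [hp]
        simp only [sub_self, mul_zero]
        exact mul_nonneg (mul_nonneg (ha _) (hb _)) (hh p)
      · exact mul_le_mul_of_nonneg_left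
          (by simpa using hgh p.1 p.2 hp) (mul_nonneg (ha _) (hb _))
    have hid : ∑ p : S × S, a p.1 * b p.2 * (g p.1 - g p.2)
        = (1 - α) * (∑ y, a y * g y - ∑ y, b y * g y) := by
      rw [Fintype.sum_prod_type]
      have expand : ∀ y1 y2 : S, a y1 * b y2 * (g y1 - g y2)
          = (a y1 * g y1) * b y2 - a y1 * (b y2 * g y2) := fun y1 y2 => by ring
      have inner : ∀ y1, ∑ y2, ((a y1 * g y1) * b y2 - a y1 * (b y2 * g y2))
          = (a y1 * g y1) * (1 - α) - a y1 * ∑ y2, b y2 * g y2 := by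
        intro y1
        rw [Finset.sum_sub_distrib, ← Finset.mul_sum, ← Finset.mul_sum, hsb]
      simp_rw [expand, inner, Finset.sum_sub_distrib, ← Finset.sum_mul]
      rw [hsa]
      ring
    have hid2 : ∑ p : S × S, a p.1 * b p.2 * h p
        = (1 - α) * ∑ p : S × S, a p.1 * b p.2 / (1 - α) * h p := by
      rw [Finset.mul_sum]
      refine Finset.sum_congr rfl fun p _ => ?_
      field_simp
    rw [hLHS, hRHS]
    have h2 := hkey
    rw [hid, hid2] at h2
    exact le_of_mul_le_mul_left h2 hpos

lemma mulVec_nonneg_le_one (Q : Matrix S S ℝ) (hn : ∀ x y, 0 ≤ Q x y)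
    (hr : ∀ x, ∑ y, Q x y = 1) (f : S → ℝ) (hf0 : ∀ y, 0 ≤ f y) (hf1 : ∀ y, f y ≤ 1)
    (x : S) : 0 ≤ Q.mulVec f x ∧ Q.mulVec f x ≤ 1 := by
  constructor
  · exact Finset.sum_nonneg fun y _ => mul_nonneg (hn x y) (hf0 y)
  · calc Q.mulVec f x = ∑ y, Q x y * f y := rfl
      _ ≤ ∑ y, Q x y * 1 := Finset.sum_le_sum fun y _ =>
          mul_le_mul_of_nonneg_left (hf1 y) (hn x y)
      _ = 1 := by simpa using hr x

/-- Main claim: per-pair coupling bound, by induction on `n`. -/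
lemma main_claim (m : ℕ) :
    ∀ (n : ℕ) (P : ℕ → Matrix S S ℝ),
      (∀ t x y, 0 ≤ P t x y) → (∀ t x, ∑ y, P t x y = 1) →
      ∀ f : S → ℝ, (∀ y, 0 ≤ f y) → (∀ y, f y ≤ 1) →
      ∀ x1 x2 : S, x1 ≠ x2 →
      (transMat P 0 (n * m)).mulVec f x1 - (transMat P 0 (n * m)).mulVec f x2
        ≤ (couplingProd P m n).mulVec (fun _ => 1) (x1, x2) := by
  intro n
  induction n with
  | zero =>
      intro P _ _ f hf0 hf1 x1 x2 _
      have h1 : (0 : ℕ) * m = 0 := by omega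
      rw [h1]
      show (1 : Matrix S S ℝ).mulVec f x1 - (1 : Matrix S S ℝ).mulVec f x2
        ≤ (1 : Matrix (S×S) (S×S) ℝ).mulVec (fun _ => 1) (x1, x2)
      rw [Matrix.one_mulVec, Matrix.one_mulVec]
      show f x1 - f x2 ≤ (1:ℝ)
      have := hf1 x1; have := hf0 x2
      linarith
  | succ n ih =>
      intro P hn hr f hf0 hf1 x1 x2 hx
      have hsplit : (n + 1) * m = m + n * m := by ring
      rw [hsplit, transMat_add P m (n * m) 0, couplingProd_succ_left m n P]
      set P' : ℕ → Matrix S S ℝ := fun t => P (t + m) with hP'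
      have hshift : transMat P (0 + m) (n * m) = transMat P' 0 (n * m) :=
        (transMat_shift P m (n * m) 0).symm
      rw [hshift]
      rw [← Matrix.mulVec_mulVec, ← Matrix.mulVec_mulVec]
      set g : S → ℝ := (transMat P' 0 (n * m)).mulVec f with hg
      set h : S × S → ℝ := (couplingProd P' m n).mulVec (fun _ => 1) with hhdef
      have hP'n : ∀ t x y, 0 ≤ P' t x y := fun t x y => hn (t + m) x y
      have hP'r : ∀ t x, ∑ y, P' t x y = 1 := fun t x => hr (t + m) x
      have hgb := fun x => mulVec_nonneg_le_one (transMat P' 0 (n*m))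
        (fun x y => transMat_nonneg P' hP'n (n*m) 0 x y)
        (fun x => transMat_row P' hP'r (n*m) 0 x) f hf0 hf1 x
      exact key_step (transMat P 0 m)
        (fun x y => transMat_nonneg P hn m 0 x y)
        (fun x => transMat_row P hr m 0 x)
        g h
        (fun p => Finset.sum_nonneg fun q _ => mul_nonneg
          (couplingProd_nonneg P' hP'r m n p q) (by norm_num))
        (fun y1 y2 hy => ih P' hP'n hP'r f hf0 hf1 y1 y2 hy)
        x1 x2 hx

end Aux

/-- **Coupling bound for two initial distributions, non-homogeneous case.**
For probability vectors `μ¹, μ²` and every `n ≥ 1`,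
`max_A ((μ¹ P_{0,nm})(A) - (μ² P_{0,nm})(A))
  ≤ ∑_{x1 ≠ x2} μ¹(x1) μ²(x2) ((V_0^{(m)} ⋯ V_{(n-1)m}^{(m)}) 𝟙)(x1,x2)`. -/
theorem nonhomogeneous_coupling_initial_measures
    {S : Type*} [Fintype S] [DecidableEq S] [Nontrivial S]
    (P : ℕ → Matrix S S ℝ)
    (hnonneg : ∀ t x y, 0 ≤ P t x y) (hrow : ∀ t x, ∑ y, P t x y = 1)
    (m : ℕ) (hm : 1 ≤ m)
    (μ₁ μ₂ : S → ℝ)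
    (hμ₁0 : ∀ x, 0 ≤ μ₁ x) (hμ₁1 : ∑ x, μ₁ x = 1)
    (hμ₂0 : ∀ x, 0 ≤ μ₂ x) (hμ₂1 : ∑ x, μ₂ x = 1) :
    ∀ n : ℕ, 1 ≤ n → ∀ A : Finset S,
      ∑ y ∈ A, Matrix.vecMul μ₁ (transMat P 0 (n * m)) y
        - ∑ y ∈ A, Matrix.vecMul μ₂ (transMat P 0 (n * m)) y
      ≤ ∑ p ∈ Finset.univ.offDiag,
          μ₁ p.1 * μ₂ p.2 * (couplingProd P m n).mulVec (fun _ => 1) p := by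
  intro n hn A
  set Q := transMat P 0 (n * m) with hQ
  set f : S → ℝ := fun y => if y ∈ A then (1:ℝ) else 0 with hf
  set F : S → ℝ := Q.mulVec f with hF
  have hFval : ∀ x, F x = ∑ y ∈ A, Q x y := by
    intro x
    show ∑ y, Q x y * (if y ∈ A then (1:ℝ) else 0) = ∑ y ∈ A, Q x y
    simp only [mul_ite, mul_one, mul_zero]
    rw [Finset.sum_ite_mem, Finset.univ_inter]
  have hf0 : ∀ y, 0 ≤ f y := by intro y; rw [hf]; dsimp only; split_ifs <;> norm_num
  have hf1 : ∀ y, f y ≤ 1 := by intro y; rw [hf]; dsimp only; split_ifs <;> norm_num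
  have hstep1 : ∀ (μ : S → ℝ), ∑ y ∈ A, Matrix.vecMul μ Q y = ∑ x, μ x * F x := by
    intro μ
    have hvm : ∀ y, Matrix.vecMul μ Q y = ∑ x, μ x * Q x y := fun y => rfl
    simp_rw [hvm, hFval]
    rw [Finset.sum_comm]
    refine Finset.sum_congr rfl fun x _ => ?_
    rw [Finset.mul_sum]
  rw [hstep1 μ₁, hstep1 μ₂]
  have hdiff : ∑ x, μ₁ x * F x - ∑ x, μ₂ x * F x
      = ∑ p ∈ Finset.univ ×ˢ Finset.univ, μ₁ p.1 * μ₂ p.2 * (F p.1 - F p.2) := by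
    rw [Finset.sum_product]
    have expand : ∀ x1 x2 : S, μ₁ x1 * μ₂ x2 * (F x1 - F x2)
        = (μ₁ x1 * F x1) * μ₂ x2 - μ₁ x1 * (μ₂ x2 * F x2) := fun _ _ => by ring
    have inner : ∀ x1, ∑ x2, ((μ₁ x1 * F x1) * μ₂ x2 - μ₁ x1 * (μ₂ x2 * F x2))
        = (μ₁ x1 * F x1) * 1 - μ₁ x1 * ∑ x2, μ₂ x2 * F x2 := by
      intro x1
      rw [Finset.sum_sub_distrib, ← Finset.mul_sum, ← Finset.mul_sum, hμ₂1]
    simp_rw [expand, inner, Finset.sum_sub_distrib, ← Finset.sum_mul]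
    rw [hμ₁1]
    ring
  rw [hdiff]
  have hsub : (Finset.univ : Finset S).offDiag ⊆ (Finset.univ ×ˢ Finset.univ : Finset (S × S)) := fun p _ => by
    simp [Finset.mem_product]
  have hvan : ∀ p ∈ Finset.univ ×ˢ Finset.univ, p ∉ Finset.univ.offDiag →
      μ₁ p.1 * μ₂ p.2 * (F p.1 - F p.2) = 0 := by
    intro p _ hp
    have hpe : p.1 = p.2 := by
      by_contra hne
      exact hp (Finset.mem_offDiag.2 ⟨Finset.mem_univ _, Finset.mem_univ _, hne⟩)
    rw [hpe, sub_self, mul_zero]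
  rw [← Finset.sum_subset hsub hvan]
  refine Finset.sum_le_sum fun p hp => ?_
  have hne : p.1 ≠ p.2 := (Finset.mem_offDiag.1 hp).2.2
  refine mul_le_mul_of_nonneg_left ?_ (mul_nonneg (hμ₁0 _) (hμ₂0 _))
  have hmc := main_claim m n P hnonneg hrow f hf0 hf1 p.1 p.2 hne
  simpa using hmc
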